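/- arXiv:1308.2704 — 3 statements merged into one kernel-verified Lean document; each statement's English description precedes it below -/
import Mathlib

section
/- For every real number α > 1 and every finite-dimensional real inner product space V there exists a constant c > 0 such that for all a, b ∈ V one has ⟨(1+‖b‖²)^{α−1} b − (1+‖a‖²)^{α−1} a, b − a⟩ ≥ c ‖b − a‖^{2α}. -/
open scoped RealInnerProductSpace

private lemma coercivity_aux (α : ℝ) (hα : 1 < α)
    {V : Type*} [NormedAddCommGroup V] [InnerProductSpace ℝ V]
    (a b : V) (hab : ‖a‖ ≤ ‖b‖) :
    ⟪((1 + ‖b‖ ^ 2) ^ (α - 1)) • b - ((1 + ‖a‖ ^ 2) ^ (α - 1)) • a, b - a⟫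
      ≥ (1/2 * (1/4 : ℝ) ^ (α - 1)) * ‖b - a‖ ^ (2 * α) := by
  set A := ‖a‖ ^ 2 with hA
  set B := ‖b‖ ^ 2 with hB
  set ga := (1 + A) ^ (α - 1) with hga_def
  set gb := (1 + B) ^ (α - 1) with hgb_def
  set r := ‖b - a‖ with hr_def
  have hA0 : (0:ℝ) ≤ A := sq_nonneg _
  have hB0 : (0:ℝ) ≤ B := sq_nonneg _
  have hAB : A ≤ B := by
    simp only [hA, hB]; exact pow_le_pow_left₀ (norm_nonneg a) hab 2
  have hexp : (0:ℝ) ≤ α - 1 := by linarith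
  have hga_pos : 0 < ga := Real.rpow_pos_of_pos (by linarith) _
  have horder : ga ≤ gb := Real.rpow_le_rpow (by linarith) (by linarith) hexp
  have hD : ⟪gb • b - ga • a, b - a⟫ = gb * B - (gb + ga) * ⟪a, b⟫ + ga * A := by
    simp only [inner_sub_left, inner_sub_right, real_inner_smul_left,
      real_inner_self_eq_norm_sq, ← hA, ← hB, real_inner_comm b a]
    try ring
  have hr2 : r ^ 2 = B - 2 * ⟪a, b⟫ + A := by
    rw [hr_def, norm_sub_sq_real, real_inner_comm b a]; try ring
  have hkey : ⟪gb • b - ga • a, b - a⟫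
      = 1/2 * (gb + ga) * r ^ 2 + 1/2 * (gb - ga) * (B - A) := by
    rw [hD, hr2]; ring
  have hT2 : 0 ≤ 1/2 * (gb - ga) * (B - A) := by
    apply mul_nonneg (by linarith) (by linarith)
  have hmain : ⟪gb • b - ga • a, b - a⟫ ≥ 1/2 * gb * r ^ 2 := by
    rw [hkey]
    nlinarith [mul_nonneg hga_pos.le (sq_nonneg r)]
  -- bound gb from below
  have hr0 : 0 ≤ r := norm_nonneg _
  have h1 : r ≤ 2 * ‖b‖ := by
    calc r ≤ ‖b‖ + ‖a‖ := norm_sub_le b a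
    _ ≤ 2 * ‖b‖ := by linarith
  have h2 : r ^ 2 / 4 ≤ 1 + B := by nlinarith [norm_nonneg b]
  have h3 : (r ^ 2 / 4) ^ (α - 1) ≤ gb :=
    Real.rpow_le_rpow (by positivity) h2 hexp
  have hfinal : (1/2 * (1/4 : ℝ) ^ (α - 1)) * r ^ (2 * α)
      ≤ 1/2 * gb * r ^ 2 := by
    rcases eq_or_lt_of_le hr0 with h | hrpos
    · rw [← h]
      rw [Real.zero_rpow (by positivity)]
      simp
    · have e1 : (r ^ 2 / 4 : ℝ) ^ (α - 1) = r ^ (2 * (α - 1)) * (1/4 : ℝ) ^ (α - 1) := by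
        rw [div_eq_mul_inv, ← one_div, Real.mul_rpow (by positivity) (by norm_num)]
        congr 1
        rw [← Real.rpow_natCast r 2, ← Real.rpow_mul hr0]
        norm_num
      have e2 : r ^ (2 * α) = r ^ (2 * (α - 1)) * r ^ 2 := by
        rw [← Real.rpow_natCast r 2, ← Real.rpow_add hrpos]
        congr 1
        push_cast
        ring
      calc (1/2 * (1/4 : ℝ) ^ (α - 1)) * r ^ (2 * α)
          = 1/2 * (r ^ 2 / 4) ^ (α - 1) * r ^ 2 := by rw [e1, e2]; ring
        _ ≤ 1/2 * gb * r ^ 2 := by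
            apply mul_le_mul_of_nonneg_right _ (sq_nonneg r)
            nlinarith
  linarith [hmain]

/-- **Coercivity inequality.** For every real `α > 1` and every finite-dimensional real inner
product space `V` there exists `c > 0` such that for all `a b : V`,
`⟨(1+‖b‖²)^(α-1) b - (1+‖a‖²)^(α-1) a, b - a⟩ ≥ c ‖b - a‖^(2α)`. -/
theorem coercivity_inequality (α : ℝ) (hα : 1 < α)
    (V : Type*) [NormedAddCommGroup V] [InnerProductSpace ℝ V] [FiniteDimensional ℝ V] :
    ∃ c : ℝ, 0 < c ∧ ∀ a b : V,
      ⟪((1 + ‖b‖ ^ 2) ^ (α - 1)) • b - ((1 + ‖a‖ ^ 2) ^ (α - 1)) • a, b - a⟫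
        ≥ c * ‖b - a‖ ^ (2 * α) := by
  refine ⟨1/2 * (1/4 : ℝ) ^ (α - 1), by positivity, fun a b => ?_⟩
  rcases le_total ‖a‖ ‖b‖ with h | h
  · exact coercivity_aux α hα a b h
  · have := coercivity_aux α hα b a h
    have heq : ⟪((1 + ‖a‖ ^ 2) ^ (α - 1)) • a - ((1 + ‖b‖ ^ 2) ^ (α - 1)) • b, a - b⟫
        = ⟪((1 + ‖b‖ ^ 2) ^ (α - 1)) • b - ((1 + ‖a‖ ^ 2) ^ (α - 1)) • a, b - a⟫ := by
      rw [show ((1 + ‖a‖ ^ 2) ^ (α - 1)) • a - ((1 + ‖b‖ ^ 2) ^ (α - 1)) • b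
          = -(((1 + ‖b‖ ^ 2) ^ (α - 1)) • b - ((1 + ‖a‖ ^ 2) ^ (α - 1)) • a) by abel,
        show a - b = -(b - a) by abel, inner_neg_neg]
    rw [heq, norm_sub_rev a b] at this
    exact this
end

section
/- Let α > 1, x₀ ∈ ℝ⁴, ρ > 0, r > 0, and let A be a local Yang–Mills α-connection whose components are smooth on B_ρ(x₀). Define the rescaled connection Ã on B_{ρ/r}(0) by Ã_i(x) = r·A_i(x₀ + r x). Then F^{Ã}_{ij}(x) = r² F^A_{ij}(x₀ + r x) for all x ∈ B_{ρ/r}(0), and Ã satisfies, for every j, the rescaled equation ∑_{i=1}^4 ∇^{Ã}_i F^{Ã}_{ij} + (α−1)(r⁴ + |F_{Ã}|²)^{−1} ∑_{i=1}^4 ∂_i(|F_{Ã}|²) F^{Ã}_{ij} = 0 on B_{ρ/r}(0). -/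
open MeasureTheory Metric Filter
open scoped BigOperators ENNReal Topology

noncomputable section

/-- Euclidean space `ℝ⁴`. -/
abbrev E4 := EuclideanSpace ℝ (Fin 4)

/-- `n × n` real matrices. -/
abbrev Mat (n : ℕ) := Matrix (Fin n) (Fin n) ℝ

attribute [local instance] Matrix.frobeniusNormedAddCommGroup Matrix.frobeniusNormedSpace

variable {n : ℕ}

/-- The matrix commutator `[X, Y] = XY - YX`. -/
def mbra (X Y : Mat n) : Mat n := X * Y - Y * X

/-- The Frobenius inner product of matrices. -/
def minner (X Y : Mat n) : ℝ := ∑ a, ∑ b, X a b * Y a b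

/-- Partial derivative `∂ᵢ` of a matrix-valued map on `ℝ⁴`. -/
def pderiv (i : Fin 4) (f : E4 → Mat n) (x : E4) : Mat n :=
  fderiv ℝ f x (EuclideanSpace.single i 1)

/-- Partial derivative `∂ᵢ` of a scalar function on `ℝ⁴`. -/
def spderiv (i : Fin 4) (f : E4 → ℝ) (x : E4) : ℝ :=
  fderiv ℝ f x (EuclideanSpace.single i 1)

/-- Curvature component `F^A_{ij} = ∂ᵢ A_j - ∂_j A_i + [A_i, A_j]`. -/
def curv (A : Fin 4 → E4 → Mat n) (i j : Fin 4) (x : E4) : Mat n :=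
  pderiv i (A j) x - pderiv j (A i) x + mbra (A i x) (A j x)

/-- Covariant derivative `∇^A_k G = ∂_k G + [A_k, G]`. -/
def covDeriv (A : Fin 4 → E4 → Mat n) (k : Fin 4) (G : E4 → Mat n) (x : E4) : Mat n :=
  pderiv k G x + mbra (A k x) (G x)

/-- Pointwise squared curvature norm `|F_A|² = ∑_{i<j} ‖F^A_{ij}‖²` (Frobenius norm). -/
def curvNormSq (A : Fin 4 → E4 → Mat n) (x : E4) : ℝ :=
  ∑ i : Fin 4, ∑ j : Fin 4, if i < j then ‖curv A i j x‖ ^ 2 else 0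

/-- `|∇^A F_A|² = ∑_k ∑_{i<j} ‖∇^A_k F^A_{ij}‖²`. -/
def covCurvNormSq (A : Fin 4 → E4 → Mat n) (x : E4) : ℝ :=
  ∑ k : Fin 4, ∑ i : Fin 4, ∑ j : Fin 4,
    if i < j then ‖covDeriv A k (curv A i j) x‖ ^ 2 else 0

/-- `|D_A^* F_A|² = ∑_j ‖∑_i ∇^A_i F^A_{ij}‖²`. -/
def dstarCurvNormSq (A : Fin 4 → E4 → Mat n) (x : E4) : ℝ :=
  ∑ j : Fin 4, ‖∑ i : Fin 4, covDeriv A i (curv A i j) x‖ ^ 2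

/-- `|A|² = ∑_i ‖A_i‖²`. -/
def connNormSq (A : Fin 4 → E4 → Mat n) (x : E4) : ℝ :=
  ∑ i : Fin 4, ‖A i x‖ ^ 2

/-- `A` is a local Yang–Mills `α`-connection on `U`:
`∑ᵢ ∇^A_i F^A_{ij} + (α-1)(1+|F_A|²)⁻¹ ∑ᵢ ∂ᵢ(|F_A|²) F^A_{ij} = 0` on `U` for each `j`. -/
def IsYMalpha (α : ℝ) (A : Fin 4 → E4 → Mat n) (U : Set E4) : Prop :=
  ∀ x ∈ U, ∀ j : Fin 4,
    (∑ i : Fin 4, covDeriv A i (curv A i j) x)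
      + ((α - 1) * (1 + curvNormSq A x)⁻¹) •
          (∑ i : Fin 4, spderiv i (curvNormSq A) x • curv A i j x) = 0


section AuxRescale

attribute [local instance] Matrix.frobeniusNormedRing Matrix.frobeniusNormedAlgebra

lemma mbra_smul (a b : ℝ) (X Y : Mat n) : mbra (a • X) (b • Y) = (a * b) • mbra X Y := by
  unfold mbra
  rw [smul_mul_assoc, mul_smul_comm, smul_smul, smul_mul_assoc, mul_smul_comm, smul_smul,
    mul_comm b a, smul_sub]

lemma frob_sq (M : Mat n) : ‖M‖ ^ 2 = ∑ a, ∑ b, (M a b) ^ 2 := by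
  have h0 : (0:ℝ) ≤ ∑ a, ∑ b, ‖M a b‖ ^ (2:ℝ) := by positivity
  rw [Matrix.frobenius_norm_def, ← Real.rpow_natCast _ 2, ← Real.rpow_mul h0]
  rw [show (1/2 : ℝ) * ((2:ℕ):ℝ) = 1 by norm_num, Real.rpow_one]
  apply Finset.sum_congr rfl; intro a _
  apply Finset.sum_congr rfl; intro b _
  rw [show ((2:ℝ) = ((2:ℕ):ℝ)) by norm_num, Real.rpow_natCast]
  simp [Real.norm_eq_abs, sq_abs]

lemma curvNormSq_nonneg (A : Fin 4 → E4 → Mat n) (x : E4) : 0 ≤ curvNormSq A x := by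
  unfold curvNormSq
  apply Finset.sum_nonneg; intro i _
  apply Finset.sum_nonneg; intro j _
  split <;> positivity

lemma fderiv_comp_affine {F : Type*} [NormedAddCommGroup F] [NormedSpace ℝ F]
    (f : E4 → F) (x₀ : E4) (r : ℝ) (x : E4)
    (hf : DifferentiableAt ℝ f (x₀ + r • x)) (v : E4) :
    fderiv ℝ (fun y => f (x₀ + r • y)) x v = r • fderiv ℝ f (x₀ + r • x) v := by
  have hφ : HasFDerivAt (fun y : E4 => x₀ + r • y)
      (r • ContinuousLinearMap.id ℝ E4) x :=
    ((hasFDerivAt_id x).const_smul r).const_add x₀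
  have h2 : HasFDerivAt (fun y => f (x₀ + r • y))
      ((fderiv ℝ f (x₀ + r • x)).comp (r • ContinuousLinearMap.id ℝ E4)) x :=
    hf.hasFDerivAt.comp x hφ
  rw [h2.fderiv]
  simp

lemma diffAt_affine (x₀ : E4) (r : ℝ) (x : E4) :
    DifferentiableAt ℝ (fun y : E4 => x₀ + r • y) x :=
  ((differentiable_id.const_smul r).const_add x₀).differentiableAt

lemma entry_contDiff (a b : Fin n) : ContDiff ℝ (⊤ : ℕ∞) (fun M : Mat n => M a b) := by
  exact (LinearMap.toContinuousLinearMap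
    ({ toFun := fun M => M a b
       map_add' := fun M M' => rfl
       map_smul' := fun c M => rfl } : Mat n →ₗ[ℝ] ℝ)).contDiff

lemma contDiffAt_curv {A : Fin 4 → E4 → Mat n} {U : Set E4} (hU : IsOpen U)
    (hA : ∀ i, ContDiffOn ℝ (⊤ : ℕ∞) (A i) U) {y : E4} (hy : y ∈ U) (i j : Fin 4) :
    ContDiffAt ℝ (⊤ : ℕ∞) (curv A i j) y := by
  have hAt : ∀ k : Fin 4, ContDiffAt ℝ (⊤ : ℕ∞) (A k) y := fun k =>
    (hA k).contDiffAt (hU.mem_nhds hy)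
  have hp : ∀ k l : Fin 4, ContDiffAt ℝ (⊤ : ℕ∞) (pderiv k (A l)) y := by
    intro k l
    letI : NormedAddCommGroup (E4 →L[ℝ] Mat n) := by exact ContinuousLinearMap.toNormedAddCommGroup
    letI : NormedSpace ℝ (E4 →L[ℝ] Mat n) := by exact ContinuousLinearMap.toNormedSpace
    have h1 : ContDiffAt ℝ (⊤ : ℕ∞) (fderiv ℝ (A l)) y := (hAt l).fderiv_right (by simp)
    exact h1.clm_apply contDiffAt_const
  unfold curv mbra
  exact ((hp i j).sub (hp j i)).add (((hAt i).mul (hAt j)).sub ((hAt j).mul (hAt i)))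

lemma contDiffAt_curvNormSq {A : Fin 4 → E4 → Mat n} {U : Set E4} (hU : IsOpen U)
    (hA : ∀ i, ContDiffOn ℝ (⊤ : ℕ∞) (A i) U) {y : E4} (hy : y ∈ U) :
    ContDiffAt ℝ (⊤ : ℕ∞) (curvNormSq A) y := by
  unfold curvNormSq
  apply ContDiffAt.sum; intro i _
  apply ContDiffAt.sum; intro j _
  by_cases hij : i < j
  · simp only [if_pos hij]
    have hc := contDiffAt_curv hU hA hy i j
    have he : (fun x => ‖curv A i j x‖ ^ 2)
        = fun x => ∑ a, ∑ b, (curv A i j x a b) ^ 2 := funext fun x => frob_sq _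
    rw [he]
    apply ContDiffAt.sum; intro a _
    apply ContDiffAt.sum; intro b _
    exact (((entry_contDiff a b).contDiffAt.comp y hc).pow 2)
  · simp only [if_neg hij]
    exact contDiffAt_const

end AuxRescale

/-- **Rescaled Euler–Lagrange equation** (equation (3.2)): if `A` is a smooth Yang–Mills
`α`-connection on `B_ρ(x₀)` and `Ã_i(x) = r A_i(x₀ + r x)`, then
`F^Ã_{ij}(x) = r² F^A_{ij}(x₀ + r x)` on `B_{ρ/r}(0)` and `Ã` satisfies
`∑ᵢ ∇^Ã_i F^Ã_{ij} + (α-1)(r⁴+|F_Ã|²)⁻¹ ∑ᵢ ∂ᵢ(|F_Ã|²) F^Ã_{ij} = 0` there. -/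
theorem rescaled_equation (α : ℝ) (hα : 1 < α) (N : ℕ) (x₀ : E4) (ρ r : ℝ)
    (hρ : 0 < ρ) (hr : 0 < r) (A : Fin 4 → E4 → Mat N)
    (hA : ∀ i, ContDiffOn ℝ (⊤ : ℕ∞) (A i) (ball x₀ ρ))
    (hYM : IsYMalpha α A (ball x₀ ρ))
    (B : Fin 4 → E4 → Mat N) (hB : ∀ i x, B i x = r • A i (x₀ + r • x)) :
    (∀ x ∈ ball (0 : E4) (ρ / r), ∀ i j : Fin 4,
        curv B i j x = (r ^ 2) • curv A i j (x₀ + r • x)) ∧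
    (∀ x ∈ ball (0 : E4) (ρ / r), ∀ j : Fin 4,
        (∑ i : Fin 4, covDeriv B i (curv B i j) x)
          + ((α - 1) * (r ^ 4 + curvNormSq B x)⁻¹) •
              (∑ i : Fin 4, spderiv i (curvNormSq B) x • curv B i j x) = 0) := by
  have hUo : IsOpen (ball x₀ ρ) := isOpen_ball
  have hVo : IsOpen (ball (0:E4) (ρ / r)) := isOpen_ball
  have hmap : ∀ x ∈ ball (0:E4) (ρ / r), x₀ + r • x ∈ ball x₀ ρ := by
    intro x hx
    rw [mem_ball_zero_iff] at hx
    rw [mem_ball, dist_eq_norm, add_sub_cancel_left, norm_smul, Real.norm_eq_abs,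
      abs_of_pos hr]
    calc r * ‖x‖ < r * (ρ / r) := by exact mul_lt_mul_of_pos_left hx hr
    _ = ρ := by field_simp
  have hdA : ∀ x ∈ ball (0:E4) (ρ / r), ∀ k : Fin 4,
      DifferentiableAt ℝ (A k) (x₀ + r • x) := fun x hx k =>
    ((hA k).contDiffAt (hUo.mem_nhds (hmap x hx))).differentiableAt (by simp)
  -- Part 1
  have h1 : ∀ x ∈ ball (0:E4) (ρ / r), ∀ i j : Fin 4,
      curv B i j x = (r ^ 2) • curv A i j (x₀ + r • x) := by
    intro x hx i j
    have hBfun : ∀ k : Fin 4, B k = fun y => r • A k (x₀ + r • y) := fun k => funext (hB k)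
    have hpB : ∀ k l : Fin 4,
        pderiv k (B l) x = (r ^ 2) • pderiv k (A l) (x₀ + r • x) := by
      intro k l
      have hcomp : DifferentiableAt ℝ (fun y : E4 => A l (x₀ + r • y)) x :=
        (hdA x hx l).comp x (diffAt_affine x₀ r x)
      unfold pderiv
      rw [hBfun l, show fderiv ℝ (fun y => r • A l (x₀ + r • y)) x
        = r • fderiv ℝ (fun y => A l (x₀ + r • y)) x from fderiv_fun_const_smul hcomp r]
      simp only [ContinuousLinearMap.coe_smul', Pi.smul_apply]
      rw [show fderiv ℝ (fun y => A l (x₀ + r • y)) x (EuclideanSpace.single k 1)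
        = r • fderiv ℝ (A l) (x₀ + r • x) (EuclideanSpace.single k 1) from
        fderiv_comp_affine (A l) x₀ r x (hdA x hx l) _, smul_smul, pow_two]
    unfold curv
    rw [hpB i j, hpB j i, hB i x, hB j x, mbra_smul, smul_add, smul_sub, pow_two]
  -- curvNormSq rescaling
  have h2 : ∀ x ∈ ball (0:E4) (ρ / r),
      curvNormSq B x = r ^ 4 * curvNormSq A (x₀ + r • x) := by
    intro x hx
    unfold curvNormSq
    rw [Finset.mul_sum]
    apply Finset.sum_congr rfl; intro i _
    rw [Finset.mul_sum]
    apply Finset.sum_congr rfl; intro j _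
    by_cases hij : i < j
    · simp only [if_pos hij, h1 x hx i j, norm_smul, Real.norm_eq_abs,
        abs_of_nonneg (sq_nonneg r), mul_pow]
      ring
    · simp [if_neg hij]
  -- covariant derivative rescaling
  have h3 : ∀ x ∈ ball (0:E4) (ρ / r), ∀ k j : Fin 4,
      covDeriv B k (curv B k j) x = (r ^ 3) • covDeriv A k (curv A k j) (x₀ + r • x) := by
    intro x hx k j
    have hev : curv B k j =ᶠ[𝓝 x] fun y => (r ^ 2) • curv A k j (x₀ + r • y) :=
      eventually_of_mem (hVo.mem_nhds hx) (fun y hy => h1 y hy k j)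
    have hdF : DifferentiableAt ℝ (curv A k j) (x₀ + r • x) :=
      (contDiffAt_curv hUo hA (hmap x hx) k j).differentiableAt (by simp)
    have hcomp : DifferentiableAt ℝ (fun y : E4 => curv A k j (x₀ + r • y)) x :=
      hdF.comp (f := fun y : E4 => x₀ + r • y) x (diffAt_affine x₀ r x)
    have hpd : pderiv k (curv B k j) x = (r ^ 3) • pderiv k (curv A k j) (x₀ + r • x) := by
      unfold pderiv
      rw [hev.fderiv_eq, show fderiv ℝ (fun y => (r ^ 2) • curv A k j (x₀ + r • y)) x
        = (r ^ 2) • fderiv ℝ (fun y => curv A k j (x₀ + r • y)) x from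
        fderiv_fun_const_smul hcomp (r ^ 2)]
      simp only [ContinuousLinearMap.coe_smul', Pi.smul_apply]
      rw [show fderiv ℝ (fun y => curv A k j (x₀ + r • y)) x (EuclideanSpace.single k 1)
        = r • fderiv ℝ (curv A k j) (x₀ + r • x) (EuclideanSpace.single k 1) from
        fderiv_comp_affine (curv A k j) x₀ r x hdF _, smul_smul]
      norm_num [pow_succ]
    unfold covDeriv
    rw [hpd, hB k x, h1 x hx k j, mbra_smul, smul_add]
    congr 1
    rw [show r * r ^ 2 = r ^ 3 by ring]
  -- spderiv rescaling
  have h4 : ∀ x ∈ ball (0:E4) (ρ / r), ∀ i : Fin 4,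
      spderiv i (curvNormSq B) x = (r ^ 5) * spderiv i (curvNormSq A) (x₀ + r • x) := by
    intro x hx i
    have hev : curvNormSq B =ᶠ[𝓝 x] fun y => r ^ 4 * curvNormSq A (x₀ + r • y) :=
      eventually_of_mem (hVo.mem_nhds hx) (fun y hy => h2 y hy)
    have hdC : DifferentiableAt ℝ (curvNormSq A) (x₀ + r • x) :=
      (contDiffAt_curvNormSq hUo hA (hmap x hx)).differentiableAt (by simp)
    have hcomp : DifferentiableAt ℝ (fun y : E4 => curvNormSq A (x₀ + r • y)) x :=
      hdC.comp (f := fun y : E4 => x₀ + r • y) x (diffAt_affine x₀ r x)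
    unfold spderiv
    rw [hev.fderiv_eq, fderiv_const_mul hcomp (r ^ 4)]
    simp only [ContinuousLinearMap.coe_smul', Pi.smul_apply]
    rw [fderiv_comp_affine (curvNormSq A) x₀ r x hdC]
    simp only [smul_eq_mul]
    ring
  refine ⟨h1, ?_⟩
  intro x hx j
  have hYMx := hYM _ (hmap x hx) j
  set c := curvNormSq A (x₀ + r • x) with hc
  have hsum1 : ∑ i : Fin 4, covDeriv B i (curv B i j) x
      = (r ^ 3) • ∑ i : Fin 4, covDeriv A i (curv A i j) (x₀ + r • x) := by
    rw [Finset.smul_sum]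
    exact Finset.sum_congr rfl fun i _ => h3 x hx i j
  have hsum2 : ∑ i : Fin 4, spderiv i (curvNormSq B) x • curv B i j x
      = (r ^ 7) • ∑ i : Fin 4,
          spderiv i (curvNormSq A) (x₀ + r • x) • curv A i j (x₀ + r • x) := by
    rw [Finset.smul_sum]
    apply Finset.sum_congr rfl; intro i _
    rw [h4 x hx i, h1 x hx i j, smul_smul, smul_smul]
    congr 1
    ring
  have hcoef : ((α - 1) * (r ^ 4 + curvNormSq B x)⁻¹) * r ^ 7
      = r ^ 3 * ((α - 1) * (1 + c)⁻¹) := by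
    rw [h2 x hx, ← hc]
    have hpos : (0:ℝ) < 1 + c := by
      have := curvNormSq_nonneg A (x₀ + r • x)
      rw [← hc] at this
      linarith
    have hr4 : (0:ℝ) < r ^ 4 := by positivity
    rw [show r ^ 4 + r ^ 4 * c = r ^ 4 * (1 + c) by ring, mul_inv]
    field_simp
  rw [hsum1, hsum2, smul_smul, hcoef, mul_smul, ← smul_add, hYMx, smul_zero]

end
end

section
/- Let α > 1, let U ⊆ ℝ⁴ be bounded and open, and let A and B be connections whose components are smooth on an open neighbourhood of the closure of U. Then the function t ↦ YM_α(A + tB; U) := ∫_U (1 + |F_{A+tB}|²)^α dx is differentiable at t = 0, with derivative ∫_U 2α (1 + |F_A|²)^{α−1} ∑_{1≤i<j≤4} ⟨F^A_{ij}, ∂_i B_j − ∂_j B_i + [A_i, B_j] − [A_j, B_i]⟩ dx. -/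
open MeasureTheory Metric Filter
open scoped BigOperators ENNReal Topology

noncomputable section

attribute [local instance] Matrix.frobeniusNormedAddCommGroup Matrix.frobeniusNormedSpace

variable {n : ℕ}

section AuxLemmas

attribute [local instance] Matrix.frobeniusNormedRing

lemma norm_sq_eq_minner (M : Mat n) : ‖M‖ ^ 2 = minner M M := by
  have h : (0:ℝ) ≤ ∑ i, ∑ j, ‖M i j‖ ^ (2:ℝ) := by positivity
  rw [Matrix.frobenius_norm_def, ← Real.rpow_natCast (_ ^ (1/2:ℝ)) 2, ← Real.rpow_mul h]
  norm_num
  simp [minner, sq]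

lemma minner_eq_norms (X Y : Mat n) :
    minner X Y = (‖X + Y‖ ^ 2 - ‖X‖ ^ 2 - ‖Y‖ ^ 2) / 2 := by
  rw [norm_sq_eq_minner, norm_sq_eq_minner, norm_sq_eq_minner]
  have h : minner (X + Y) (X + Y) = minner X X + 2 * minner X Y + minner Y Y := by
    simp only [minner, Matrix.add_apply, Finset.mul_sum, ← Finset.sum_add_distrib]
    exact Finset.sum_congr rfl fun a _ => Finset.sum_congr rfl fun b _ => by ring
  rw [h]; ring

lemma abs_minner_le (X Y : Mat n) : |minner X Y| ≤ (‖X‖ ^ 2 + ‖Y‖ ^ 2) / 2 := by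
  rw [norm_sq_eq_minner, norm_sq_eq_minner]
  unfold minner
  calc |∑ a, ∑ b, X a b * Y a b| ≤ ∑ a, |∑ b, X a b * Y a b| := Finset.abs_sum_le_sum_abs _ _
    _ ≤ ∑ a, ∑ b, |X a b * Y a b| :=
        Finset.sum_le_sum fun a _ => Finset.abs_sum_le_sum_abs _ _
    _ ≤ ∑ a, ∑ b, (X a b * X a b + Y a b * Y a b) / 2 := by
        refine Finset.sum_le_sum fun a _ => Finset.sum_le_sum fun b _ => ?_
        nlinarith [sq_nonneg (|X a b| - |Y a b|), abs_mul (X a b) (Y a b),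
          abs_mul_abs_self (X a b), abs_mul_abs_self (Y a b), abs_nonneg (X a b),
          abs_nonneg (Y a b)]
    _ = (∑ a, ∑ b, X a b * X a b + ∑ a, ∑ b, Y a b * Y a b) / 2 := by
        simp only [← Finset.sum_div, Finset.sum_add_distrib]

/-- First-order term in the expansion of the curvature of `A + tB`. -/
def Dm (A B : Fin 4 → E4 → Mat n) (i j : Fin 4) (x : E4) : Mat n :=
  pderiv i (B j) x - pderiv j (B i) x + mbra (A i x) (B j x) - mbra (A j x) (B i x)

/-- Second-order term in the expansion of the curvature of `A + tB`. -/
def Em (B : Fin 4 → E4 → Mat n) (i j : Fin 4) (x : E4) : Mat n := mbra (B i x) (B j x)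

lemma curv_expand (A B : Fin 4 → E4 → Mat n) (t : ℝ) (x : E4)
    (hAd : ∀ i, DifferentiableAt ℝ (A i) x) (hBd : ∀ i, DifferentiableAt ℝ (B i) x)
    (i j : Fin 4) :
    curv (fun i y => A i y + t • B i y) i j x
      = curv A i j x + t • Dm A B i j x + (t ^ 2) • Em B i j x := by
  have h1 : ∀ k, fderiv ℝ (fun y => A k y + t • B k y) x
      = fderiv ℝ (A k) x + t • fderiv ℝ (B k) x := fun k => by
    exact ((hAd k).hasFDerivAt.add ((hBd k).hasFDerivAt.const_smul t)).fderiv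
  simp only [curv, pderiv, Dm, Em, h1, ContinuousLinearMap.add_apply,
    ContinuousLinearMap.coe_smul', Pi.smul_apply, mbra]
  simp only [mul_add, add_mul, smul_mul_assoc, mul_smul_comm, smul_smul]
  module

lemma norm_expand (C D E : Mat n) (t : ℝ) :
    ‖C + t • D + (t ^ 2) • E‖ ^ 2 =
      minner C C + 2 * minner C D * t + (minner D D + 2 * minner C E) * t ^ 2
        + 2 * minner D E * t ^ 3 + minner E E * t ^ 4 := by
  rw [norm_sq_eq_minner]
  simp only [minner, Matrix.add_apply, Matrix.smul_apply, smul_eq_mul,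
    Finset.sum_mul, Finset.mul_sum, ← Finset.sum_add_distrib]
  refine Finset.sum_congr rfl fun a _ => ?_
  refine Finset.sum_congr rfl fun b _ => ?_
  ring

lemma hasDerivAt_poly (c0 c1 c2 c3 c4 t : ℝ) :
    HasDerivAt (fun s => c0 + c1 * s + c2 * s ^ 2 + c3 * s ^ 3 + c4 * s ^ 4)
      (c1 + 2 * c2 * t + 3 * c3 * t ^ 2 + 4 * c4 * t ^ 3) t := by
  have h : HasDerivAt (fun s : ℝ => c0 + c1 * s + c2 * s ^ 2 + c3 * s ^ 3 + c4 * s ^ 4)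
      (c1 * 1 + c2 * (2 * t ^ 1) + c3 * (3 * t ^ 2) + c4 * (4 * t ^ 3)) t := by
    exact ((((hasDerivAt_id t).const_mul c1).const_add c0).add
      ((hasDerivAt_pow 2 t).const_mul c2)).add ((hasDerivAt_pow 3 t).const_mul c3) |>.add
      ((hasDerivAt_pow 4 t).const_mul c4)
  convert h using 1
  ring

lemma abs_poly4_le (c0 c1 c2 c3 c4 t M : ℝ) (ht : |t| ≤ 1)
    (h0 : |c0| ≤ M) (h1 : |c1| ≤ M) (h2 : |c2| ≤ M) (h3 : |c3| ≤ M) (h4 : |c4| ≤ M) :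
    |c0 + c1 * t + c2 * t ^ 2 + c3 * t ^ 3 + c4 * t ^ 4| ≤ 5 * M := by
  have hM : 0 ≤ M := le_trans (abs_nonneg _) h0
  have hp : ∀ k : ℕ, |t ^ k| ≤ 1 := fun k => by
    rw [abs_pow]; exact pow_le_one₀ (abs_nonneg t) ht
  have hb : ∀ c : ℝ, ∀ k : ℕ, |c| ≤ M → |c * t ^ k| ≤ M := fun c k hc => by
    rw [abs_mul]
    calc |c| * |t ^ k| ≤ M * 1 := mul_le_mul hc (hp k) (abs_nonneg _) hM
      _ = M := mul_one M
  calc |c0 + c1 * t + c2 * t ^ 2 + c3 * t ^ 3 + c4 * t ^ 4|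
      ≤ |c0 + c1 * t + c2 * t ^ 2 + c3 * t ^ 3| + |c4 * t ^ 4| := abs_add_le _ _
    _ ≤ (|c0 + c1 * t + c2 * t ^ 2| + |c3 * t ^ 3|) + |c4 * t ^ 4| := by
        gcongr; exact abs_add_le _ _
    _ ≤ ((|c0 + c1 * t| + |c2 * t ^ 2|) + |c3 * t ^ 3|) + |c4 * t ^ 4| := by
        gcongr; exact abs_add_le _ _
    _ ≤ (((|c0| + |c1 * t|) + |c2 * t ^ 2|) + |c3 * t ^ 3|) + |c4 * t ^ 4| := by
        gcongr; exact abs_add_le _ _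
    _ ≤ (((M + M) + M) + M) + M := by
        gcongr
        · simpa using hb c1 1 h1
        · exact hb c2 2 h2
        · exact hb c3 3 h3
        · exact hb c4 4 h4
    _ = 5 * M := by ring

lemma abs_poly3_le (c0 c1 c2 c3 t M : ℝ) (ht : |t| ≤ 1)
    (h0 : |c0| ≤ M) (h1 : |c1| ≤ M) (h2 : |c2| ≤ M) (h3 : |c3| ≤ M) :
    |c0 + c1 * t + c2 * t ^ 2 + c3 * t ^ 3| ≤ 4 * M := by
  have hM : 0 ≤ M := le_trans (abs_nonneg _) h0
  have hp : ∀ k : ℕ, |t ^ k| ≤ 1 := fun k => by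
    rw [abs_pow]; exact pow_le_one₀ (abs_nonneg t) ht
  have hb : ∀ c : ℝ, ∀ k : ℕ, |c| ≤ M → |c * t ^ k| ≤ M := fun c k hc => by
    rw [abs_mul]
    calc |c| * |t ^ k| ≤ M * 1 := mul_le_mul hc (hp k) (abs_nonneg _) hM
      _ = M := mul_one M
  calc |c0 + c1 * t + c2 * t ^ 2 + c3 * t ^ 3|
      ≤ |c0 + c1 * t + c2 * t ^ 2| + |c3 * t ^ 3| := abs_add_le _ _
    _ ≤ (|c0 + c1 * t| + |c2 * t ^ 2|) + |c3 * t ^ 3| := by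
        gcongr; exact abs_add_le _ _
    _ ≤ ((|c0| + |c1 * t|) + |c2 * t ^ 2|) + |c3 * t ^ 3| := by
        gcongr; exact abs_add_le _ _
    _ ≤ ((M + M) + M) + M := by
        gcongr
        · simpa using hb c1 1 h1
        · exact hb c2 2 h2
        · exact hb c3 3 h3
    _ = 4 * M := by ring

/-- The expansion of `curvNormSq (A + tB)` as a polynomial in `t`. -/
def Pfun (A B : Fin 4 → E4 → Mat n) (t : ℝ) (x : E4) : ℝ :=
  ∑ i : Fin 4, ∑ j : Fin 4, if i < j then
    minner (curv A i j x) (curv A i j x) + 2 * minner (curv A i j x) (Dm A B i j x) * t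
      + (minner (Dm A B i j x) (Dm A B i j x) + 2 * minner (curv A i j x) (Em B i j x)) * t ^ 2
      + 2 * minner (Dm A B i j x) (Em B i j x) * t ^ 3
      + minner (Em B i j x) (Em B i j x) * t ^ 4
  else 0

/-- The `t`-derivative of `Pfun`. -/
def Pfun' (A B : Fin 4 → E4 → Mat n) (t : ℝ) (x : E4) : ℝ :=
  ∑ i : Fin 4, ∑ j : Fin 4, if i < j then
    2 * minner (curv A i j x) (Dm A B i j x)
      + 2 * (minner (Dm A B i j x) (Dm A B i j x)
          + 2 * minner (curv A i j x) (Em B i j x)) * t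
      + 3 * (2 * minner (Dm A B i j x) (Em B i j x)) * t ^ 2
      + 4 * minner (Em B i j x) (Em B i j x) * t ^ 3
  else 0

lemma hasDerivAt_Pfun (A B : Fin 4 → E4 → Mat n) (t : ℝ) (x : E4) :
    HasDerivAt (fun s => Pfun A B s x) (Pfun' A B t x) t := by
  unfold Pfun Pfun'
  refine HasDerivAt.fun_sum fun i _ => HasDerivAt.fun_sum fun j _ => ?_
  split_ifs with hij
  · exact hasDerivAt_poly _ _ _ _ _ t
  · exact hasDerivAt_const t 0

lemma Pfun_zero (A B : Fin 4 → E4 → Mat n) (x : E4) :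
    Pfun A B 0 x = curvNormSq A x := by
  unfold Pfun curvNormSq
  refine Finset.sum_congr rfl fun i _ => Finset.sum_congr rfl fun j _ => ?_
  split_ifs with hij
  · rw [norm_sq_eq_minner]; ring
  · rfl

lemma Pfun'_zero (A B : Fin 4 → E4 → Mat n) (x : E4) :
    Pfun' A B 0 x
      = 2 * ∑ i : Fin 4, ∑ j : Fin 4,
          if i < j then minner (curv A i j x) (Dm A B i j x) else 0 := by
  unfold Pfun'
  rw [Finset.mul_sum]
  refine Finset.sum_congr rfl fun i _ => ?_
  rw [Finset.mul_sum]
  refine Finset.sum_congr rfl fun j _ => ?_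
  split_ifs with hij <;> ring

lemma contOn_pderiv {V : Set E4} (hV : IsOpen V) {f : E4 → Mat n}
    (hf : ContDiffOn ℝ (⊤ : ℕ∞) f V) (i : Fin 4) : ContinuousOn (fun x => pderiv i f x) V := by
  have h := hf.continuousOn_fderiv_of_isOpen hV (by simp)
  exact h.clm_apply continuousOn_const

lemma contOn_minner {V : Set E4} {f g : E4 → Mat n} (hf : ContinuousOn f V)
    (hg : ContinuousOn g V) : ContinuousOn (fun x => minner (f x) (g x)) V := by
  simp only [minner_eq_norms]
  exact ((((hf.add hg).norm.pow 2).sub (hf.norm.pow 2)).sub (hg.norm.pow 2)).div_const 2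

lemma contOn_mbra {V : Set E4} {f g : E4 → Mat n} (hf : ContinuousOn f V)
    (hg : ContinuousOn g V) : ContinuousOn (fun x => mbra (f x) (g x)) V := by
  unfold mbra
  exact (hf.mul hg).sub (hg.mul hf)

lemma contOn_curv {V : Set E4} (hV : IsOpen V) {A : Fin 4 → E4 → Mat n}
    (hA : ∀ i, ContDiffOn ℝ (⊤ : ℕ∞) (A i) V) (i j : Fin 4) : ContinuousOn (curv A i j) V := by
  unfold curv
  exact ((contOn_pderiv hV (hA j) i).sub (contOn_pderiv hV (hA i) j)).add
    (contOn_mbra (hA i).continuousOn (hA j).continuousOn)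

lemma contOn_Dm {V : Set E4} (hV : IsOpen V) {A B : Fin 4 → E4 → Mat n}
    (hA : ∀ i, ContDiffOn ℝ (⊤ : ℕ∞) (A i) V) (hB : ∀ i, ContDiffOn ℝ (⊤ : ℕ∞) (B i) V) (i j : Fin 4) :
    ContinuousOn (Dm A B i j) V := by
  unfold Dm
  exact (((contOn_pderiv hV (hB j) i).sub (contOn_pderiv hV (hB i) j)).add
    (contOn_mbra (hA i).continuousOn (hB j).continuousOn)).sub
    (contOn_mbra (hA j).continuousOn (hB i).continuousOn)

lemma contOn_Em {V : Set E4} {B : Fin 4 → E4 → Mat n}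
    (hB : ∀ i, ContDiffOn ℝ (⊤ : ℕ∞) (B i) V) (i j : Fin 4) :
    ContinuousOn (Em B i j) V :=
  contOn_mbra (hB i).continuousOn (hB j).continuousOn

lemma contOn_Pfun {V : Set E4} (hV : IsOpen V) {A B : Fin 4 → E4 → Mat n}
    (hA : ∀ i, ContDiffOn ℝ (⊤ : ℕ∞) (A i) V) (hB : ∀ i, ContDiffOn ℝ (⊤ : ℕ∞) (B i) V) (t : ℝ) :
    ContinuousOn (fun x => Pfun A B t x) V := by
  unfold Pfun
  refine continuousOn_finset_sum _ fun i _ => continuousOn_finset_sum _ fun j _ => ?_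
  split_ifs with hij
  · have hC := contOn_curv hV hA i j
    have hD := contOn_Dm hV hA hB i j
    have hE := contOn_Em hB i j
    exact (((((contOn_minner hC hC).add
      (((continuousOn_const.mul (contOn_minner hC hD)).mul continuousOn_const)))).add
      (((contOn_minner hD hD).add (continuousOn_const.mul (contOn_minner hC hE))).mul
        continuousOn_const)).add
      ((continuousOn_const.mul (contOn_minner hD hE)).mul continuousOn_const)).add
      ((contOn_minner hE hE).mul continuousOn_const)
  · exact continuousOn_const

lemma contOn_Pfun' {V : Set E4} (hV : IsOpen V) {A B : Fin 4 → E4 → Mat n}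
    (hA : ∀ i, ContDiffOn ℝ (⊤ : ℕ∞) (A i) V) (hB : ∀ i, ContDiffOn ℝ (⊤ : ℕ∞) (B i) V) (t : ℝ) :
    ContinuousOn (fun x => Pfun' A B t x) V := by
  unfold Pfun'
  refine continuousOn_finset_sum _ fun i _ => continuousOn_finset_sum _ fun j _ => ?_
  split_ifs with hij
  · have hC := contOn_curv hV hA i j
    have hD := contOn_Dm hV hA hB i j
    have hE := contOn_Em hB i j
    exact (((continuousOn_const.mul (contOn_minner hC hD)).add
      ((continuousOn_const.mul ((contOn_minner hD hD).add
        (continuousOn_const.mul (contOn_minner hC hE)))).mul continuousOn_const)).add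
      ((continuousOn_const.mul (continuousOn_const.mul (contOn_minner hD hE))).mul
        continuousOn_const)).add
      ((continuousOn_const.mul (contOn_minner hE hE)).mul continuousOn_const)
  · exact continuousOn_const

end AuxLemmas

/-- **First variation of the Yang–Mills `α`-functional** (formula (2.1)): for smooth `A`, `B`
on a neighbourhood of the closure of a bounded open `U ⊆ ℝ⁴`, `t ↦ ∫_U (1+|F_{A+tB}|²)^α` is
differentiable at `t = 0` with derivative
`∫_U 2α (1+|F_A|²)^{α-1} ∑_{i<j} ⟨F^A_{ij}, ∂ᵢB_j - ∂_jB_i + [A_i,B_j] - [A_j,B_i]⟩`. -/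
theorem first_variation (α : ℝ) (hα : 1 < α) (N : ℕ) (U : Set E4)
    (hUopen : IsOpen U) (hUbdd : Bornology.IsBounded U)
    (V : Set E4) (hV : IsOpen V) (hUV : closure U ⊆ V)
    (A B : Fin 4 → E4 → Mat N)
    (hA : ∀ i, ContDiffOn ℝ (⊤ : ℕ∞) (A i) V) (hB : ∀ i, ContDiffOn ℝ (⊤ : ℕ∞) (B i) V) :
    HasDerivAt
      (fun t : ℝ =>
        ∫ x in U, (1 + curvNormSq (fun i y => A i y + t • B i y) x) ^ α)
      (∫ x in U,
        2 * α * (1 + curvNormSq A x) ^ (α - 1) *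
          ∑ i : Fin 4, ∑ j : Fin 4,
            if i < j then
              minner (curv A i j x)
                (pderiv i (B j) x - pderiv j (B i) x
                  + mbra (A i x) (B j x) - mbra (A j x) (B i x))
            else 0)
      0 := by
  classical
  have hUsubV : U ⊆ V := fun x hx => hUV (subset_closure hx)
  have hUc : IsCompact (closure U) := hUbdd.isCompact_closure
  have hαpos : (0:ℝ) < α := by linarith
  have hAd : ∀ x ∈ V, ∀ k, DifferentiableAt ℝ (A k) x := fun x hx k =>
    ((hA k).contDiffAt (hV.mem_nhds hx)).differentiableAt (by simp)
  have hBd : ∀ x ∈ V, ∀ k, DifferentiableAt ℝ (B k) x := fun x hx k =>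
    ((hB k).contDiffAt (hV.mem_nhds hx)).differentiableAt (by simp)
  have hPS : ∀ (t : ℝ), ∀ x ∈ V,
      curvNormSq (fun i y => A i y + t • B i y) x = Pfun A B t x := by
    intro t x hx
    unfold curvNormSq Pfun
    refine Finset.sum_congr rfl fun i _ => Finset.sum_congr rfl fun j _ => ?_
    split_ifs with hij
    · rw [curv_expand A B t x (hAd x hx) (hBd x hx) i j, norm_expand]
    · rfl
  have hPnn : ∀ (t : ℝ), ∀ x ∈ U, 0 ≤ Pfun A B t x := by
    intro t x hx
    rw [← hPS t x (hUsubV hx)]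
    refine Finset.sum_nonneg fun i _ => Finset.sum_nonneg fun j _ => ?_
    split_ifs <;> positivity
  obtain ⟨K0, hK0⟩ := hUc.exists_bound_of_continuousOn
    ((continuousOn_finset_sum _ fun (i : Fin 4) _ => continuousOn_finset_sum _ fun (j : Fin 4) _ =>
      (((contOn_curv hV hA i j).norm.add (contOn_Dm hV hA hB i j).norm).add
        (contOn_Em hB i j).norm)).mono hUV)
  set K := max K0 0 with hK
  have hKnn : (0:ℝ) ≤ K := le_max_right _ _
  have hnorm : ∀ x ∈ U, ∀ i j : Fin 4,
      ‖curv A i j x‖ ≤ K ∧ ‖Dm A B i j x‖ ≤ K ∧ ‖Em B i j x‖ ≤ K := by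
    intro x hx i j
    have hG : (∑ i : Fin 4, ∑ j : Fin 4,
        (‖curv A i j x‖ + ‖Dm A B i j x‖ + ‖Em B i j x‖)) ≤ K := by
      refine le_trans (le_abs_self _) (le_trans ?_ (le_max_left _ _))
      simpa [Real.norm_eq_abs] using hK0 x (subset_closure hx)
    have hterm : ‖curv A i j x‖ + ‖Dm A B i j x‖ + ‖Em B i j x‖
        ≤ ∑ i : Fin 4, ∑ j : Fin 4, (‖curv A i j x‖ + ‖Dm A B i j x‖ + ‖Em B i j x‖) := by
      refine le_trans (Finset.single_le_sum
        (f := fun j => ‖curv A i j x‖ + ‖Dm A B i j x‖ + ‖Em B i j x‖)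
        (fun j _ => by positivity) (Finset.mem_univ j)) ?_
      exact Finset.single_le_sum
        (f := fun i => ∑ j : Fin 4, (‖curv A i j x‖ + ‖Dm A B i j x‖ + ‖Em B i j x‖))
        (fun i _ => Finset.sum_nonneg fun j _ => by positivity) (Finset.mem_univ i)
    have h3 := le_trans hterm hG
    exact ⟨by linarith [norm_nonneg (Dm A B i j x), norm_nonneg (Em B i j x)],
      by linarith [norm_nonneg (curv A i j x), norm_nonneg (Em B i j x)],
      by linarith [norm_nonneg (curv A i j x), norm_nonneg (Dm A B i j x)]⟩
  have hmb : ∀ X Y : Mat N, ‖X‖ ≤ K → ‖Y‖ ≤ K → |minner X Y| ≤ K ^ 2 := by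
    intro X Y hX hY
    refine le_trans (abs_minner_le X Y) ?_
    nlinarith [norm_nonneg X, norm_nonneg Y]
  have hPle : ∀ t : ℝ, |t| ≤ 1 → ∀ x ∈ U, |Pfun A B t x| ≤ 240 * K ^ 2 := by
    intro t ht x hx
    unfold Pfun
    refine le_trans (Finset.abs_sum_le_sum_abs _ _) (le_trans (Finset.sum_le_sum
      (g := fun _ => 60 * K ^ 2) fun i _ => le_trans (Finset.abs_sum_le_sum_abs _ _)
      (le_trans (Finset.sum_le_sum (g := fun _ => 15 * K ^ 2) fun j _ => ?_) ?_)) ?_)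
    · obtain ⟨hC, hD, hE⟩ := hnorm x hx i j
      obtain ⟨m1a, m1b⟩ := abs_le.mp (hmb _ _ hC hC)
      obtain ⟨m2a, m2b⟩ := abs_le.mp (hmb _ _ hC hD)
      obtain ⟨m3a, m3b⟩ := abs_le.mp (hmb _ _ hD hD)
      obtain ⟨m4a, m4b⟩ := abs_le.mp (hmb _ _ hC hE)
      obtain ⟨m5a, m5b⟩ := abs_le.mp (hmb _ _ hD hE)
      obtain ⟨m6a, m6b⟩ := abs_le.mp (hmb _ _ hE hE)
      have hK2 : (0:ℝ) ≤ K ^ 2 := by positivity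
      split_ifs with hij
      · refine le_trans (abs_poly4_le _ _ _ _ _ t (3 * K ^ 2) ht ?_ ?_ ?_ ?_ ?_)
          (show (5:ℝ) * (3 * K ^ 2) ≤ 15 * K ^ 2 by linarith)
        · rw [abs_le]; constructor <;> linarith
        · rw [abs_le]; constructor <;> linarith
        · rw [abs_le]; constructor <;> linarith
        · rw [abs_le]; constructor <;> linarith
        · rw [abs_le]; constructor <;> linarith
      · simp; positivity
    · simp only [Finset.sum_const, Finset.card_univ, Fintype.card_fin, nsmul_eq_mul]
      norm_num
      linarith
    · simp only [Finset.sum_const, Finset.card_univ, Fintype.card_fin, nsmul_eq_mul]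
      norm_num
      linarith
  have hP'le : ∀ t : ℝ, |t| ≤ 1 → ∀ x ∈ U, |Pfun' A B t x| ≤ 384 * K ^ 2 := by
    intro t ht x hx
    unfold Pfun'
    refine le_trans (Finset.abs_sum_le_sum_abs _ _) (le_trans (Finset.sum_le_sum
      (g := fun _ => 96 * K ^ 2) fun i _ => le_trans (Finset.abs_sum_le_sum_abs _ _)
      (le_trans (Finset.sum_le_sum (g := fun _ => 24 * K ^ 2) fun j _ => ?_) ?_)) ?_)
    · obtain ⟨hC, hD, hE⟩ := hnorm x hx i j
      obtain ⟨m2a, m2b⟩ := abs_le.mp (hmb _ _ hC hD)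
      obtain ⟨m3a, m3b⟩ := abs_le.mp (hmb _ _ hD hD)
      obtain ⟨m4a, m4b⟩ := abs_le.mp (hmb _ _ hC hE)
      obtain ⟨m5a, m5b⟩ := abs_le.mp (hmb _ _ hD hE)
      obtain ⟨m6a, m6b⟩ := abs_le.mp (hmb _ _ hE hE)
      have hK2 : (0:ℝ) ≤ K ^ 2 := by positivity
      split_ifs with hij
      · refine le_trans (abs_poly3_le _ _ _ _ t (6 * K ^ 2) ht ?_ ?_ ?_ ?_)
          (show (4:ℝ) * (6 * K ^ 2) ≤ 24 * K ^ 2 by linarith)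
        · rw [abs_le]; constructor <;> linarith
        · rw [abs_le]; constructor <;> linarith
        · rw [abs_le]; constructor <;> linarith
        · rw [abs_le]; constructor <;> linarith
      · simp; positivity
    · simp only [Finset.sum_const, Finset.card_univ, Fintype.card_fin, nsmul_eq_mul]
      norm_num
      linarith
    · simp only [Finset.sum_const, Finset.card_univ, Fintype.card_fin, nsmul_eq_mul]
      norm_num
      linarith
  have hF_meas : ∀ᶠ t in 𝓝 (0:ℝ), AEStronglyMeasurable
      (fun x => (1 + curvNormSq (fun i y => A i y + t • B i y) x) ^ α)
      (volume.restrict U) := by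
    refine Eventually.of_forall fun t => ?_
    have hc : ContinuousOn (fun x => (1 + Pfun A B t x) ^ α) V :=
      (continuousOn_const.add (contOn_Pfun hV hA hB t)).rpow_const fun x _ => Or.inr hαpos.le
    refine ((hc.mono hUsubV).aestronglyMeasurable hUopen.measurableSet).congr ?_
    filter_upwards [ae_restrict_mem hUopen.measurableSet] with x hx
    rw [hPS t x (hUsubV hx)]
  have hF_int : Integrable
      (fun x => (1 + curvNormSq (fun i y => A i y + (0:ℝ) • B i y) x) ^ α)
      (volume.restrict U) := by
    have hconn : (fun i y => A i y + (0:ℝ) • B i y) = A := by funext i y; simp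
    rw [hconn]
    have hcA : ContinuousOn (fun x => (1:ℝ) + curvNormSq A x) V := by
      have h : (fun x => (1:ℝ) + curvNormSq A x) = fun x => 1 + Pfun A B 0 x := by
        funext x; rw [Pfun_zero]
      rw [h]; exact continuousOn_const.add (contOn_Pfun hV hA hB 0)
    have hc : ContinuousOn (fun x => ((1:ℝ) + curvNormSq A x) ^ α) V :=
      hcA.rpow_const fun x _ => Or.inr hαpos.le
    exact ((hc.mono hUV).integrableOn_compact hUc).mono_set subset_closure
  have hF'_meas : AEStronglyMeasurable
      (fun x => Pfun' A B 0 x * α * (1 + Pfun A B 0 x) ^ (α - 1)) (volume.restrict U) := by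
    have hc : ContinuousOn (fun x => Pfun' A B 0 x * α * (1 + Pfun A B 0 x) ^ (α - 1)) V :=
      ((contOn_Pfun' hV hA hB 0).mul continuousOn_const).mul
        ((continuousOn_const.add (contOn_Pfun hV hA hB 0)).rpow_const
          fun x _ => Or.inr (by linarith))
    exact (hc.mono hUsubV).aestronglyMeasurable hUopen.measurableSet
  have hUfin : volume U < ⊤ := lt_of_le_of_lt (measure_mono subset_closure) hUc.measure_lt_top
  have h_bound : ∀ᵐ x ∂(volume.restrict U), ∀ t ∈ ball (0:ℝ) 1,
      ‖Pfun' A B t x * α * (1 + Pfun A B t x) ^ (α - 1)‖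
        ≤ 384 * K ^ 2 * α * (1 + 240 * K ^ 2) ^ (α - 1) := by
    filter_upwards [ae_restrict_mem hUopen.measurableSet] with x hx
    intro t htb
    have ht1 : |t| ≤ 1 := by
      rw [mem_ball, Real.dist_eq, sub_zero] at htb; exact htb.le
    have h1 := hP'le t ht1 x hx
    have h2' : Pfun A B t x ≤ 240 * K ^ 2 := le_trans (le_abs_self _) (hPle t ht1 x hx)
    have h0 := hPnn t x hx
    rw [Real.norm_eq_abs, abs_mul, abs_mul, abs_of_pos hαpos,
      abs_of_nonneg (Real.rpow_nonneg (by linarith) _)]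
    have hr : (1 + Pfun A B t x) ^ (α - 1) ≤ (1 + 240 * K ^ 2) ^ (α - 1) :=
      Real.rpow_le_rpow (by linarith) (by linarith) (by linarith)
    exact mul_le_mul (mul_le_mul h1 le_rfl hαpos.le (by positivity)) hr
      (Real.rpow_nonneg (by linarith) _) (mul_nonneg (by positivity) hαpos.le)
  have h_diff : ∀ᵐ x ∂(volume.restrict U), ∀ t ∈ ball (0:ℝ) 1,
      HasDerivAt (fun s => (1 + curvNormSq (fun i y => A i y + s • B i y) x) ^ α)
        (Pfun' A B t x * α * (1 + Pfun A B t x) ^ (α - 1)) t := by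
    filter_upwards [ae_restrict_mem hUopen.measurableSet] with x hx
    intro t _
    have heq : (fun s : ℝ => (1 + curvNormSq (fun i y => A i y + s • B i y) x) ^ α)
        = fun s => (1 + Pfun A B s x) ^ α := funext fun s => by rw [hPS s x (hUsubV hx)]
    rw [heq]
    exact ((hasDerivAt_Pfun A B t x).const_add 1).rpow_const (Or.inr hα.le)
  have key := hasDerivAt_integral_of_dominated_loc_of_deriv_le (μ := volume.restrict U)
    (F := fun t x => (1 + curvNormSq (fun i y => A i y + t • B i y) x) ^ α)
    (F' := fun t x => Pfun' A B t x * α * (1 + Pfun A B t x) ^ (α - 1))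
    (x₀ := (0:ℝ)) (s := ball (0:ℝ) 1)
    (bound := fun _ => 384 * K ^ 2 * α * (1 + 240 * K ^ 2) ^ (α - 1))
    (ball_mem_nhds (0:ℝ) one_pos) hF_meas hF_int hF'_meas h_bound
    (integrableOn_const hUfin.ne) h_diff
  have hfin : ∀ x : E4, Pfun' A B 0 x * α * (1 + Pfun A B 0 x) ^ (α - 1)
      = 2 * α * (1 + curvNormSq A x) ^ (α - 1) *
          ∑ i : Fin 4, ∑ j : Fin 4,
            if i < j then
              minner (curv A i j x)
                (pderiv i (B j) x - pderiv j (B i) x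
                  + mbra (A i x) (B j x) - mbra (A j x) (B i x))
            else 0 := by
    intro x
    rw [Pfun'_zero, Pfun_zero]
    show _ = 2 * α * (1 + curvNormSq A x) ^ (α - 1) *
        ∑ i : Fin 4, ∑ j : Fin 4, if i < j then minner (curv A i j x) (Dm A B i j x) else 0
    ring
  have heq2 : (∫ x in U, Pfun' A B 0 x * α * (1 + Pfun A B 0 x) ^ (α - 1))
      = ∫ x in U, 2 * α * (1 + curvNormSq A x) ^ (α - 1) *
          ∑ i : Fin 4, ∑ j : Fin 4,
            if i < j then
              minner (curv A i j x)
                (pderiv i (B j) x - pderiv j (B i) x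
                  + mbra (A i x) (B j x) - mbra (A j x) (B i x))
            else 0 :=
    integral_congr_ae (Eventually.of_forall fun x => hfin x)
  exact heq2 ▸ key.2

end
end
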